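/- arXiv:1607.01569 — 2 statements merged into one kernel-verified Lean document; each statement's English description precedes it below -/
import Mathlib

section
/- For CES utilities and the Fisher market with Leontief valuations: in an ε-market equilibrium (p', x') with Leontief utilities where all buyers exhaust their budgets, each buyer's optimal utility at prices p' equals Bᵢ/φᵢ(p') with φᵢ(p') = Σ_j v_{i,j} p'_j, and the Nash social welfare of x' is at least 1/(1+ε) times the optimal Nash social welfare: ∏ᵢ uᵢ(x*ᵢ)^{Bᵢ} ≤ (1+ε)^𝓑 ∏ᵢ uᵢ(x'ᵢ)^{Bᵢ}. -/
/-!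
At prices `p'` a Leontief buyer pays `φᵢ(p')` per unit of utility, so the best affordable
utility is `Bᵢ / φᵢ(p')`, and the ε-optimality of `x'` gives `Bᵢ / φᵢ(p') ≤ (1 + ε) uᵢ(x'ᵢ)`.
Any feasible allocation costs `∑ᵢ uᵢ φᵢ(p') ≤ ∑ⱼ p'ⱼ = 𝓑` at these prices, and under that
budget `∏ᵢ uᵢ^{Bᵢ}` is at most `∏ᵢ (Bᵢ / φᵢ(p'))^{Bᵢ}` by `t ≤ exp (t - 1)` (the weak duality
of the Eisenberg–Gale program).
-/

/-- Leontief utility: minimum over demanded goods of `x j / v j`. -/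
noncomputable def leontief {m : ℕ} (v x : Fin m → ℝ) : ℝ :=
  ⨅ j : {j : Fin m // 0 < v j}, x j.val / v j.val

/-- Money needed per unit of utility at prices `p` for Leontief valuation `v`. -/
def phi {m : ℕ} (v p : Fin m → ℝ) : ℝ := ∑ j, v j * p j

open Finset

section RpowBounds

lemma rpow_le_div_rpow_mul_exp {u b c : ℝ} (hu : 0 ≤ u) (hb : 0 < b) (hc : 0 < c) :
    u ^ b ≤ (b / c) ^ b * Real.exp (u * c - b) := by
  calc u ^ b = (b / c * (u * c / b)) ^ b := by congr 1; field_simp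
    _ = (b / c) ^ b * (u * c / b) ^ b := Real.mul_rpow (by positivity) (by positivity)
    _ ≤ (b / c) ^ b * Real.exp (u * c / b - 1) ^ b := by
        gcongr; linarith [Real.add_one_le_exp (u * c / b - 1)]
    _ = (b / c) ^ b * Real.exp (u * c - b) := by
        rw [← Real.exp_mul]; congr 2; field_simp

variable {ι : Type*} [Fintype ι]

lemma prod_rpow_le_prod_div_rpow {b c u : ι → ℝ} (hb : ∀ i, 0 < b i) (hc : ∀ i, 0 < c i)
    (hu : ∀ i, 0 ≤ u i) (hbudget : ∑ i, u i * c i ≤ ∑ i, b i) :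
    ∏ i, u i ^ b i ≤ ∏ i, (b i / c i) ^ b i := by
  have hexp : Real.exp (∑ i, (u i * c i - b i)) ≤ 1 := by
    rw [Real.exp_le_one_iff, sum_sub_distrib]; linarith
  calc ∏ i, u i ^ b i ≤ ∏ i, ((b i / c i) ^ b i * Real.exp (u i * c i - b i)) :=
        prod_le_prod (fun i _ => Real.rpow_nonneg (hu i) _)
          (fun i _ => rpow_le_div_rpow_mul_exp (hu i) (hb i) (hc i))
    _ = (∏ i, (b i / c i) ^ b i) * Real.exp (∑ i, (u i * c i - b i)) := by
        rw [prod_mul_distrib, Real.exp_sum]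
    _ ≤ ∏ i, (b i / c i) ^ b i :=
        mul_le_of_le_one_right
          (prod_nonneg fun i _ => Real.rpow_nonneg (div_nonneg (hb i).le (hc i).le) _) hexp

lemma prod_rpow_le_rpow_sum_mul_prod_rpow {a : ℝ} (ha : 0 < a) {b r u : ι → ℝ}
    (hb : ∀ i, 0 ≤ b i) (hr : ∀ i, 0 ≤ r i) (hru : ∀ i, r i ≤ a * u i) :
    ∏ i, r i ^ b i ≤ a ^ (∑ i, b i) * ∏ i, u i ^ b i := by
  have hu : ∀ i, 0 ≤ u i := fun i => nonneg_of_mul_nonneg_right ((hr i).trans (hru i)) ha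
  calc ∏ i, r i ^ b i ≤ ∏ i, (a * u i) ^ b i :=
        prod_le_prod (fun i _ => Real.rpow_nonneg (hr i) _)
          (fun i _ => Real.rpow_le_rpow (hr i) (hru i) (hb i))
    _ = a ^ (∑ i, b i) * ∏ i, u i ^ b i := by
        rw [Real.rpow_sum_of_pos ha, ← prod_mul_distrib]
        exact prod_congr rfl fun i _ => Real.mul_rpow ha.le (hu i)

end RpowBounds

section Leontief

variable {m : ℕ} {v x p : Fin m → ℝ}

lemma leontief_nonneg (hx : ∀ j, 0 ≤ x j) : 0 ≤ leontief v x :=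
  Real.iInf_nonneg fun j => div_nonneg (hx j.1) j.2.le

lemma leontief_le_div (hx : ∀ j, 0 ≤ x j) {j : Fin m} (hj : 0 < v j) :
    leontief v x ≤ x j / v j :=
  ciInf_le ⟨0, by rintro _ ⟨k, rfl⟩; exact div_nonneg (hx k.1) k.2.le⟩
    (⟨j, hj⟩ : {j : Fin m // 0 < v j})

lemma leontief_mul_le (hx : ∀ j, 0 ≤ x j) {j : Fin m} (hj : 0 ≤ v j) :
    leontief v x * v j ≤ x j := by
  rcases hj.eq_or_lt with hj | hj
  · rw [← hj, mul_zero]; exact hx j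
  · exact (le_div_iff₀ hj).mp (leontief_le_div hx hj)

lemma leontief_const_mul (hvpos : ∃ j, 0 < v j) (c : ℝ) :
    leontief v (fun j => c * v j) = c := by
  obtain ⟨j, hj⟩ := hvpos
  have : Nonempty {j : Fin m // 0 < v j} := ⟨⟨j, hj⟩⟩
  simp only [leontief, fun k : {j : Fin m // 0 < v j} => mul_div_cancel_right₀ c k.2.ne',
    ciInf_const]

lemma phi_pos (hv : ∀ j, 0 ≤ v j) (hvpos : ∃ j, 0 < v j) (hp : ∀ j, 0 < p j) :
    0 < phi v p := by
  obtain ⟨j, hj⟩ := hvpos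
  exact sum_pos' (fun k _ => mul_nonneg (hv k) (hp k).le) ⟨j, mem_univ j, mul_pos hj (hp j)⟩

lemma leontief_mul_phi_le (hx : ∀ j, 0 ≤ x j) (hv : ∀ j, 0 ≤ v j) (hp : ∀ j, 0 ≤ p j) :
    leontief v x * phi v p ≤ ∑ j, p j * x j := by
  rw [phi, mul_sum]
  refine sum_le_sum fun j _ => ?_
  calc leontief v x * (v j * p j) = (leontief v x * v j) * p j := by ring
    _ ≤ x j * p j := mul_le_mul_of_nonneg_right (leontief_mul_le hx (hv j)) (hp j)
    _ = p j * x j := mul_comm _ _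

lemma isGreatest_leontief_of_budget {b : ℝ} (hb : 0 ≤ b) (hv : ∀ j, 0 ≤ v j)
    (hvpos : ∃ j, 0 < v j) (hp : ∀ j, 0 < p j) :
    IsGreatest {t | ∃ y : Fin m → ℝ, (∀ j, 0 ≤ y j) ∧ ∑ j, p j * y j ≤ b ∧
      t = leontief v y} (b / phi v p) := by
  have hphi := phi_pos hv hvpos hp
  refine ⟨⟨fun j => b / phi v p * v j, fun j => by have := hv j; positivity, ?_,
    (leontief_const_mul hvpos _).symm⟩, ?_⟩
  · have hcost : ∑ j, p j * (b / phi v p * v j) = b / phi v p * phi v p := by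
      rw [phi, mul_sum]; exact sum_congr rfl fun j _ => by ring
    rw [hcost, div_mul_cancel₀ _ hphi.ne']
  · rintro t ⟨y, hy, hcost, rfl⟩
    exact (le_div_iff₀ hphi).mpr
      ((leontief_mul_phi_le hy hv fun j => (hp j).le).trans hcost)

lemma sum_leontief_mul_phi_le {ι : Type*} [Fintype ι] {v x : ι → Fin m → ℝ}
    (hx : ∀ i j, 0 ≤ x i j) (hfeas : ∀ j, ∑ i, x i j ≤ 1) (hv : ∀ i j, 0 ≤ v i j)
    (hp : ∀ j, 0 ≤ p j) :
    ∑ i, leontief (v i) (x i) * phi (v i) p ≤ ∑ j, p j := by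
  calc ∑ i, leontief (v i) (x i) * phi (v i) p ≤ ∑ i, ∑ j, p j * x i j :=
        sum_le_sum fun i _ => leontief_mul_phi_le (hx i) (hv i) hp
    _ = ∑ j, p j * ∑ i, x i j := by rw [sum_comm]; simp only [mul_sum]
    _ ≤ ∑ j, p j := sum_le_sum fun j _ => mul_le_of_le_one_right (hp j) (hfeas j)

end Leontief

theorem eps_market_equilibrium_nsw_general (n m : ℕ) (v : Fin n → Fin m → ℝ)
    (B : Fin n → ℝ) (ε : ℝ) (x' xstar : Fin n → Fin m → ℝ) (p' : Fin m → ℝ)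
    (hB : ∀ i, 1 ≤ B i) (hε : 0 < ε)
    (hv : ∀ i j, 0 ≤ v i j) (hvpos : ∀ i, ∃ j, 0 < v i j)
    (hp' : ∀ j, 0 < p' j) (hp'sum : ∑ j, p' j = ∑ i, B i)
    (hεopt : ∀ i, ∀ y : Fin m → ℝ, (∀ j, 0 ≤ y j) → ∑ j, p' j * y j ≤ B i →
      leontief (v i) y ≤ (1 + ε) * leontief (v i) (x' i))
    (hxstar : ∀ i j, 0 ≤ xstar i j) (hxstarfeas : ∀ j, ∑ i, xstar i j ≤ 1) :
    (∀ i, IsGreatest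
        {t | ∃ y : Fin m → ℝ, (∀ j, 0 ≤ y j) ∧ ∑ j, p' j * y j ≤ B i ∧
          t = leontief (v i) y}
        (B i / phi (v i) p')) ∧
      ∏ i, leontief (v i) (xstar i) ^ B i ≤
        (1 + ε) ^ (∑ i, B i) * ∏ i, leontief (v i) (x' i) ^ B i := by
  have hBpos : ∀ i, 0 < B i := fun i => one_pos.trans_le (hB i)
  have hphi : ∀ i, 0 < phi (v i) p' := fun i => phi_pos (hv i) (hvpos i) hp'
  have hbest i := isGreatest_leontief_of_budget (hBpos i).le (hv i) (hvpos i) hp'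
  refine ⟨hbest, ?_⟩
  have hratio : ∀ i, B i / phi (v i) p' ≤ (1 + ε) * leontief (v i) (x' i) := by
    intro i
    obtain ⟨y, hy, hcost, hyval⟩ := (hbest i).1
    exact hyval ▸ hεopt i y hy hcost
  have hspend : ∑ i, leontief (v i) (xstar i) * phi (v i) p' ≤ ∑ i, B i :=
    (sum_leontief_mul_phi_le hxstar hxstarfeas hv fun j => (hp' j).le).trans_eq hp'sum
  calc ∏ i, leontief (v i) (xstar i) ^ B i ≤ ∏ i, (B i / phi (v i) p') ^ B i :=
        prod_rpow_le_prod_div_rpow hBpos hphi (fun i => leontief_nonneg (hxstar i)) hspend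
    _ ≤ (1 + ε) ^ (∑ i, B i) * ∏ i, leontief (v i) (x' i) ^ B i :=
        prod_rpow_le_rpow_sum_mul_prod_rpow (by linarith) (fun i => (hBpos i).le)
          (fun i => div_nonneg (hBpos i).le (hphi i).le) hratio

/-- In an ε-market equilibrium `(p', x')` with Leontief utilities, each buyer's
optimal utility at prices `p'` equals `Bᵢ/φᵢ(p')`, and the Nash social welfare
of `x'` is at least `1/(1+ε)` of the optimum:
`∏ᵢ uᵢ(x*ᵢ)^{Bᵢ} ≤ (1+ε)^𝓑 ∏ᵢ uᵢ(x'ᵢ)^{Bᵢ}`. -/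
theorem eps_market_equilibrium_nsw (n m : ℕ) (v : Fin n → Fin m → ℝ)
    (B : Fin n → ℝ) (ε : ℝ) (x' xstar : Fin n → Fin m → ℝ) (p' : Fin m → ℝ)
    (hB : ∀ i, 1 ≤ B i) (hε : 0 < ε)
    (hv : ∀ i j, 0 ≤ v i j) (hvpos : ∀ i, ∃ j, 0 < v i j)
    (hp' : ∀ j, 0 < p' j) (hp'sum : ∑ j, p' j = ∑ i, B i)
    (hx' : ∀ i j, 0 ≤ x' i j) (hx'feas : ∀ j, ∑ i, x' i j ≤ 1)
    (hbudget : ∀ i, ∑ j, p' j * x' i j = B i)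
    (hεopt : ∀ i, ∀ y : Fin m → ℝ, (∀ j, 0 ≤ y j) → ∑ j, p' j * y j ≤ B i →
      leontief (v i) y ≤ (1 + ε) * leontief (v i) (x' i))
    (hxstar : ∀ i j, 0 ≤ xstar i j) (hxstarfeas : ∀ j, ∑ i, xstar i j ≤ 1)
    (hopt : ∀ x : Fin n → Fin m → ℝ, (∀ i j, 0 ≤ x i j) →
      (∀ j, ∑ i, x i j ≤ 1) →
      ∑ i, B i * Real.log (leontief (v i) (x i)) ≤
        ∑ i, B i * Real.log (leontief (v i) (xstar i))) :
    (∀ i, IsGreatest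
        {t | ∃ y : Fin m → ℝ, (∀ j, 0 ≤ y j) ∧ ∑ j, p' j * y j ≤ B i ∧
          t = leontief (v i) y}
        (B i / phi (v i) p')) ∧
      ∏ i, leontief (v i) (xstar i) ^ B i ≤
        (1 + ε) ^ (∑ i, B i) * ∏ i, leontief (v i) (x' i) ^ B i :=
  eps_market_equilibrium_nsw_general n m v B ε x' xstar p' hB hε hv hvpos hp' hp'sum hεopt hxstar
    hxstarfeas
end

section
/- Fix an agent i with concave, strictly increasing utility uᵢ: [0,1]ᵐ → ℝ₊, budget Bᵢ > 0, total budget 𝓑 = Σ Bₖ, and suppose the other agents' total bids Dⱼ = Σ_{k≠i} b_{k,j} are strictly positive for each good j with Σⱼ Dⱼ ≤ 𝓑 − Bᵢ. Then the strategy yⱼ = Bᵢ·Dⱼ/(𝓑 − Bᵢ) is feasible (Σⱼ yⱼ ≤ Bᵢ) and guarantees agent i a fraction yⱼ/(yⱼ + Dⱼ) = Bᵢ/𝓑 of every good j, hence utility at least uᵢ((Bᵢ/𝓑)·𝟙) ≥ (Bᵢ/𝓑)·uᵢ(𝟙). -/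
open Set

theorem ConcaveOn.smul_le_map_smul {𝕜 E β : Type*} [Ring 𝕜] [PartialOrder 𝕜] [IsOrderedRing 𝕜]
    [AddCommGroup E] [AddCommGroup β] [PartialOrder β] [IsOrderedAddMonoid β]
    [Module 𝕜 E] [Module 𝕜 β] [PosSMulMono 𝕜 β] {s : Set E} {f : E → β}
    (hf : ConcaveOn 𝕜 s f) (h0 : (0 : E) ∈ s) (hf0 : 0 ≤ f 0) {x : E} (hx : x ∈ s)
    {t : 𝕜} (ht : t ∈ Icc (0 : 𝕜) 1) : t • f x ≤ f (t • x) := by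
  have hmix : t • f x + (1 - t) • f 0 ≤ f (t • x + (1 - t) • (0 : E)) :=
    hf.2 hx h0 ht.1 (sub_nonneg.2 ht.2) (add_sub_cancel t 1)
  rw [smul_zero, add_zero] at hmix
  exact (le_add_of_nonneg_right (smul_nonneg (sub_nonneg.2 ht.2) hf0)).trans hmix

theorem sum_mul_div_le_of_sum_le {ι : Type*} (s : Finset ι) {c S : ℝ} {D : ι → ℝ}
    (hc : 0 ≤ c) (hS : 0 < S) (hD : ∑ j ∈ s, D j ≤ S) : ∑ j ∈ s, c * D j / S ≤ c := by
  rw [← Finset.sum_div, ← Finset.mul_sum, div_le_iff₀ hS]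
  exact mul_le_mul_of_nonneg_left hD hc

/-- The bid `y = b d / (B - b)` makes `y + d = B d / (B - b)`, so the share `y / (y + d)` is
independent of the opposing bid `d`. -/
theorem proportional_bid_share {b B d : ℝ} (hd : d ≠ 0) (hbB : B - b ≠ 0) :
    (b * d / (B - b)) / (b * d / (B - b) + d) = b / B := by
  have hsum : b * d / (B - b) + d = B * d / (B - b) := by
    field_simp
    ring
  rw [hsum, div_div_div_cancel_right₀ hbB, mul_div_mul_right b B hd]

theorem trading_post_proportional_safe_strategy_general (m : ℕ)
    (u : (Fin m → ℝ) → ℝ) (Bi 𝓑 : ℝ) (D : Fin m → ℝ)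
    (hu_conc : ConcaveOn ℝ (Set.Icc (0 : Fin m → ℝ) 1) u)
    (hu_nonneg : ∀ x ∈ Set.Icc (0 : Fin m → ℝ) 1, 0 ≤ u x)
    (hBi : 0 < Bi) (hB : Bi < 𝓑)
    (hD : ∀ j, 0 < D j) (hDsum : ∑ j, D j ≤ 𝓑 - Bi) :
    (∑ j, Bi * D j / (𝓑 - Bi) ≤ Bi) ∧
      (∀ j, (Bi * D j / (𝓑 - Bi)) / (Bi * D j / (𝓑 - Bi) + D j) = Bi / 𝓑) ∧
      ((Bi / 𝓑) • (1 : Fin m → ℝ)) ∈ Set.Icc (0 : Fin m → ℝ) 1 ∧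
      (Bi / 𝓑) * u 1 ≤ u ((Bi / 𝓑) • (1 : Fin m → ℝ)) := by
  have hgap : 0 < 𝓑 - Bi := sub_pos.2 hB
  have ht : Bi / 𝓑 ∈ Icc (0 : ℝ) 1 :=
    ⟨div_nonneg hBi.le (hBi.trans hB).le, (div_le_one (hBi.trans hB)).2 hB.le⟩
  have h0 : (0 : Fin m → ℝ) ∈ Icc (0 : Fin m → ℝ) 1 := left_mem_Icc.2 zero_le_one
  have h1 : (1 : Fin m → ℝ) ∈ Icc (0 : Fin m → ℝ) 1 := right_mem_Icc.2 zero_le_one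
  exact ⟨sum_mul_div_le_of_sum_le _ hBi.le hgap hDsum,
    fun j => proportional_bid_share (hD j).ne' hgap.ne',
    (convex_Icc 0 1).smul_mem_of_zero_mem h0 h1 ht,
    hu_conc.smul_le_map_smul h0 (hu_nonneg 0 h0) h1 ht⟩

/-- Safe strategy in Trading Post: bidding `yⱼ = Bᵢ·Dⱼ/(𝓑−Bᵢ)` is feasible and
secures a fraction `Bᵢ/𝓑` of every good, hence utility at least
`uᵢ((Bᵢ/𝓑)·𝟙) ≥ (Bᵢ/𝓑)·uᵢ(𝟙)`. -/
theorem trading_post_proportional_safe_strategy (m : ℕ)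
    (u : (Fin m → ℝ) → ℝ) (Bi 𝓑 : ℝ) (D : Fin m → ℝ)
    (hu_conc : ConcaveOn ℝ (Set.Icc (0 : Fin m → ℝ) 1) u)
    (hu_nonneg : ∀ x ∈ Set.Icc (0 : Fin m → ℝ) 1, 0 ≤ u x)
    (hu_mono : ∀ x ∈ Set.Icc (0 : Fin m → ℝ) 1,
      ∀ y ∈ Set.Icc (0 : Fin m → ℝ) 1, (∀ j, x j < y j) → u x < u y)
    (hBi : 0 < Bi) (hB : Bi < 𝓑)
    (hD : ∀ j, 0 < D j) (hDsum : ∑ j, D j ≤ 𝓑 - Bi) :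
    (∑ j, Bi * D j / (𝓑 - Bi) ≤ Bi) ∧
      (∀ j, (Bi * D j / (𝓑 - Bi)) / (Bi * D j / (𝓑 - Bi) + D j) = Bi / 𝓑) ∧
      ((Bi / 𝓑) • (1 : Fin m → ℝ)) ∈ Set.Icc (0 : Fin m → ℝ) 1 ∧
      (Bi / 𝓑) * u 1 ≤ u ((Bi / 𝓑) • (1 : Fin m → ℝ)) :=
  trading_post_proportional_safe_strategy_general m u Bi 𝓑 D hu_conc hu_nonneg hBi hB hD hDsum
end
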